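/- With E, Φ, and assumptions (A₁)–(A₅) as above, there exists δ > 0 such that for every w ∈ E with ‖w‖ = 1, the unique maximum point s_w of s ↦ Φ(sw) satisfies s_w ≥ δ. Moreover, for each compact subset K of the unit sphere S of E, there exists C_K > 0 such that s_w ≤ C_K for all w ∈ K. -/

import Mathlib

open scoped BigOperators
open Filter Topology

noncomputable section

abbrev Vtx (N : ℕ) := Fin N → ℤ

def LatAdj {N : ℕ} (x y : Vtx N) : Prop := (∑ i, |x i - y i|) = 1

instance {N : ℕ} (x y : Vtx N) : Decidable (LatAdj x y) := by
  unfold LatAdj; infer_instance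

/-- `∑_x |u x|^p`. -/
noncomputable def lpSum (N : ℕ) (p : ℝ) (u : Vtx N → ℝ) : ℝ := ∑' x, |u x| ^ p

/-- `(1/2) ∑_{x∼y} |u x − u y|^p` (sum over ordered pairs of adjacent vertices). -/
noncomputable def pEnergy (N : ℕ) (p : ℝ) (u : Vtx N → ℝ) : ℝ :=
  (1/2) * ∑' z : Vtx N × Vtx N, if LatAdj z.1 z.2 then |u z.1 - u z.2| ^ p else 0

/-- `(1/2) ∑_{x∼y} |∇_{xy}u|^{p−2} (∇_{xy}u)(∇_{xy}v)`. -/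
noncomputable def gradPair (N : ℕ) (p : ℝ) (u v : Vtx N → ℝ) : ℝ :=
  (1/2) * ∑' z : Vtx N × Vtx N,
    if LatAdj z.1 z.2 then |u z.2 - u z.1| ^ (p - 2) * (u z.2 - u z.1) * (v z.2 - v z.1) else 0

/-- discrete p-Laplacian. -/
noncomputable def pLap (N : ℕ) (p : ℝ) (u : Vtx N → ℝ) (x : Vtx N) : ℝ :=
  ∑' y, if LatAdj x y then |u y - u x| ^ (p - 2) * (u y - u x) else 0

/-- `‖u‖^p` for the potential norm. -/
noncomputable def eNormP (N : ℕ) (p : ℝ) (V : Vtx N → ℝ) (u : Vtx N → ℝ) : ℝ :=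
  pEnergy N p u + ∑' x, V x * |u x| ^ p

/-- the potential norm `‖u‖`. -/
noncomputable def eNorm (N : ℕ) (p : ℝ) (V : Vtx N → ℝ) (u : Vtx N → ℝ) : ℝ :=
  (eNormP N p V u) ^ (1/p)

/-- `F(x,t) = ∫₀^t f(x,s) ds`. -/
noncomputable def Fprim {N : ℕ} (f : Vtx N → ℝ → ℝ) (x : Vtx N) (t : ℝ) : ℝ :=
  ∫ s in (0:ℝ)..t, f x s

/-- the variational functional `Φ`. -/
noncomputable def PhiFun (N : ℕ) (p : ℝ) (V : Vtx N → ℝ) (f : Vtx N → ℝ → ℝ)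
    (u : Vtx N → ℝ) : ℝ :=
  (1/p) * eNormP N p V u - ∑' x, Fprim f x (u x)

/-- `Φ'(u)v`. -/
noncomputable def PhiDeriv (N : ℕ) (p : ℝ) (V : Vtx N → ℝ) (f : Vtx N → ℝ → ℝ)
    (u v : Vtx N → ℝ) : ℝ :=
  gradPair N p u v + (∑' x, V x * |u x| ^ (p - 2) * u x * v x) - ∑' x, f x (u x) * v x

/-- membership in `E = ℓ^p`. -/
def memE (N : ℕ) (p : ℝ) (u : Vtx N → ℝ) : Prop := Summable fun x => |u x| ^ p

/-- the Nehari manifold. -/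
def Nehari (N : ℕ) (p : ℝ) (V : Vtx N → ℝ) (f : Vtx N → ℝ → ℝ) : Set (Vtx N → ℝ) :=
  {u | memE N p u ∧ u ≠ 0 ∧ PhiDeriv N p V f u u = 0}

abbrev Elp (N : ℕ) (p : ℝ) := lp (fun _ : Vtx N => ℝ) (ENNReal.ofReal p)

/-! Write `Φ(sw) = sᵖ/p - ∑ₓ F(x, s w(x))` for `‖w‖ = 1`. Periodicity bounds `V` between
positive constants `V₁ ≤ V ≤ V₂`, so `∑ |w|ᵖ ≤ 1/V₁` and `|w(x)| ≤ V₁^(-1/p)` uniformly on the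
sphere. Since `F(x,u) = o(|u|ᵖ)` at `0` by (A₃), there are `t₀, c₀ > 0` with `Φ(t₀w) ≥ c₀` for
every unit `w`. By (A₁), (A₃) and (A₅), `F ≥ -D|u|ᵖ`, hence `Φ(sw) ≤ (1/p + D/V₁) sᵖ`, and
`c₀ ≤ Φ(s_w w)` bounds `s_w` from below. On a compact `K ∌ 0` every `w` has a coordinate with
`|w(x₀)| ≥ c > 0` for a uniform `c`; since `F(x,u)/|u|ᵖ → ∞` by (A₅), the term at that coordinate
makes `Φ(sw) < 0 < c₀` once `s` exceeds a uniform bound, so no maximizer lies beyond it. -/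

theorem periodic_smul_of_periodic_single {ι β : Type*} [Fintype ι] [DecidableEq ι]
    {g : (ι → ℤ) → β} {T : ℤ} (h : ∀ i, Function.Periodic g (T • Pi.single i 1)) (k : ι → ℤ) :
    Function.Periodic g (T • k) := by
  have hk : T • k = ∑ i, k i • (T • Pi.single i (1 : ℤ)) := by
    ext j
    simp [Finset.sum_apply, Pi.single_apply, mul_comm]
  rw [hk]
  exact Finset.sum_induction _ (Function.Periodic g) (fun _ _ => Function.Periodic.add_period)
    (fun x => by rw [add_zero]) fun i _ => (h i).zsmul (k i)

theorem exists_min_max_of_periodic_single {ι : Type*} [Fintype ι] [DecidableEq ι]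
    {g : (ι → ℤ) → ℝ} {T : ℕ} (hT : 0 < T)
    (h : ∀ x i, g (x + (T : ℤ) • Pi.single i 1) = g x) :
    ∃ a b, ∀ x, g a ≤ g x ∧ g x ≤ g b := by
  set S : Set (ι → ℤ) := Set.univ.pi fun _ => Set.Ico 0 (T : ℤ)
  have hS : S.Finite := Set.Finite.pi fun _ => Set.finite_Ico _ _
  have hT' : (0 : ℤ) < T := by exact_mod_cast hT
  have hrep : ∀ x, ∃ r ∈ S, g x = g r := fun x =>
    ⟨fun i => x i % T, fun i _ => ⟨Int.emod_nonneg _ hT'.ne', Int.emod_lt_of_pos _ hT'⟩, by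
      have hx : x = (fun i => x i % T) + (T : ℤ) • fun i => x i / T := by
        ext i
        exact (Int.emod_add_mul_ediv _ _).symm
      conv_lhs => rw [hx]
      exact periodic_smul_of_periodic_single (fun i x => h x i) _ _⟩
  have h0 : (0 : ι → ℤ) ∈ S := fun _ _ => ⟨le_rfl, hT'⟩
  obtain ⟨a, -, ha⟩ := S.exists_min_image g hS ⟨0, h0⟩
  obtain ⟨b, -, hb⟩ := S.exists_max_image g hS ⟨0, h0⟩
  refine ⟨a, b, fun x => ?_⟩
  obtain ⟨r, hr, hx⟩ := hrep x
  exact hx ▸ ⟨ha r hr, hb r hr⟩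

theorem exists_pos_le_norm_apply_of_isCompact {α : Type*} {E : α → Type*}
    [∀ i, NormedAddCommGroup (E i)] {p : ENNReal} [Fact (1 ≤ p)] {K : Set (lp E p)}
    (hK : IsCompact K) (h0 : 0 ∉ K) : ∃ c > 0, ∀ w ∈ K, ∃ i, c ≤ ‖w i‖ := by
  set U : ℕ → Set (lp E p) := fun n => ⋃ i, {w | 1 / ((n : ℝ) + 1) < ‖w i‖}
  have hUo : ∀ n, IsOpen (U n) := fun n =>
    isOpen_iUnion fun i => isOpen_lt continuous_const (lp.lipschitzWith_one_eval p i).continuous.norm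
  have hcover : K ⊆ ⋃ n, U n := by
    intro w hw
    obtain ⟨i, hi⟩ : ∃ i, w i ≠ 0 := by
      by_contra! h
      exact h0 (by rwa [show w = 0 from lp.ext (funext h)] at hw)
    obtain ⟨n, hn⟩ := exists_nat_one_div_lt (norm_pos_iff.2 hi)
    exact Set.mem_iUnion.2 ⟨n, Set.mem_iUnion.2 ⟨i, hn⟩⟩
  have hmono : Monotone U := fun n m hnm => Set.iUnion_mono fun i w hw =>
    lt_of_le_of_lt (by gcongr : 1 / ((m : ℝ) + 1) ≤ 1 / ((n : ℝ) + 1)) hw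
  obtain ⟨n, hn⟩ := hK.elim_directed_cover U hUo hcover hmono.directed_le
  refine ⟨1 / ((n : ℝ) + 1), by positivity, fun w hw => ?_⟩
  obtain ⟨i, hi⟩ := Set.mem_iUnion.1 (hn hw)
  exact ⟨i, hi.le⟩

section Primitive

variable {N : ℕ} {f : Vtx N → ℝ → ℝ}

theorem abs_Fprim_le_mul_abs {x : Vtx N} {u M : ℝ} (h : ∀ s, |s| ≤ |u| → |f x s| ≤ M) :
    |Fprim f x u| ≤ M * |u| := by
  have hs : ∀ s ∈ Set.uIoc 0 u, ‖f x s‖ ≤ M := fun s hs =>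
    h s (by simpa using Set.abs_sub_left_of_mem_uIcc (Set.uIoc_subset_uIcc hs))
  simpa [Fprim] using intervalIntegral.norm_integral_le_of_norm_le_const hs

theorem abs_Fprim_le_of_abs_lt {p ε δ : ℝ} (hp : 1 ≤ p) (hε : 0 ≤ ε) {x : Vtx N}
    (hδ : ∀ s, |s| < δ → |f x s| ≤ ε * |s| ^ (p - 1)) {u : ℝ} (hu : |u| < δ) :
    |Fprim f x u| ≤ ε * |u| ^ p := by
  calc |Fprim f x u| ≤ ε * |u| ^ (p - 1) * |u| :=
        abs_Fprim_le_mul_abs fun s hs => (hδ s (hs.trans_lt hu)).trans <|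
          mul_le_mul_of_nonneg_left (Real.rpow_le_rpow (abs_nonneg s) hs (by linarith)) hε
    _ = ε * |u| ^ p := by
        rw [mul_assoc, ← Real.rpow_add_one' (abs_nonneg u) (by linarith), sub_add_cancel]

theorem exists_abs_f_le {p q ε : ℝ} (hq : 1 ≤ q)
    (hA1 : ∃ a : ℝ, 0 < a ∧ ∀ x u, |f x u| ≤ a * (1 + |u| ^ (q - 1)))
    (hA3 : ∀ ε > (0:ℝ), ∃ δ > (0:ℝ), ∀ x u, |u| < δ → |f x u| ≤ ε * |u| ^ (p - 1))
    (hε : 0 < ε) : ∃ C ≥ 0, ∀ x u, |f x u| ≤ ε * |u| ^ (p - 1) + C * |u| ^ (q - 1) := by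
  obtain ⟨a, ha, hfa⟩ := hA1
  obtain ⟨δ, hδ, hfδ⟩ := hA3 ε hε
  refine ⟨a * (δ ^ (1 - q) + 1), by positivity, fun x u => ?_⟩
  rcases lt_or_ge |u| δ with hu | hu
  · linarith [hfδ x u hu, show 0 ≤ a * (δ ^ (1 - q) + 1) * |u| ^ (q - 1) by positivity]
  · have hone : 1 ≤ δ ^ (1 - q) * |u| ^ (q - 1) := by
      rw [show 1 - q = -(q - 1) by ring, Real.rpow_neg hδ.le, ← div_eq_inv_mul,
        one_le_div (by positivity)]
      exact Real.rpow_le_rpow hδ.le hu (by linarith)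
    calc |f x u| ≤ a * (1 + |u| ^ (q - 1)) := hfa x u
      _ ≤ a * (δ ^ (1 - q) * |u| ^ (q - 1) + |u| ^ (q - 1)) := by gcongr
      _ ≤ ε * |u| ^ (p - 1) + a * (δ ^ (1 - q) + 1) * |u| ^ (q - 1) := by
        nlinarith [show 0 ≤ ε * |u| ^ (p - 1) by positivity]

theorem exists_abs_Fprim_le {p q ε : ℝ} (hp : 1 ≤ p) (hq : 1 ≤ q)
    (hA1 : ∃ a : ℝ, 0 < a ∧ ∀ x u, |f x u| ≤ a * (1 + |u| ^ (q - 1)))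
    (hA3 : ∀ ε > (0:ℝ), ∃ δ > (0:ℝ), ∀ x u, |u| < δ → |f x u| ≤ ε * |u| ^ (p - 1))
    (hε : 0 < ε) : ∃ C ≥ 0, ∀ x u, |Fprim f x u| ≤ ε * |u| ^ p + C * |u| ^ q := by
  obtain ⟨C, hC, hf⟩ := exists_abs_f_le hq hA1 hA3 hε
  refine ⟨C, hC, fun x u => ?_⟩
  calc |Fprim f x u| ≤ (ε * |u| ^ (p - 1) + C * |u| ^ (q - 1)) * |u| :=
        abs_Fprim_le_mul_abs fun s hs => (hf x s).trans (by gcongr)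
    _ = ε * |u| ^ p + C * |u| ^ q := by
        rw [add_mul, mul_assoc, mul_assoc, ← Real.rpow_add_one' (abs_nonneg u) (by linarith),
          ← Real.rpow_add_one' (abs_nonneg u) (by linarith), sub_add_cancel, sub_add_cancel]

theorem exists_neg_le_Fprim {p q A C : ℝ} (hp : 0 < p) (hpq : p ≤ q) (hA : 0 ≤ A) (hC : 0 ≤ C)
    (hF : ∀ x u, |Fprim f x u| ≤ A * |u| ^ p + C * |u| ^ q)
    (hA5 : ∀ M : ℝ, ∃ R > (0:ℝ), ∀ x u, R ≤ |u| → M ≤ Fprim f x u / |u| ^ p) :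
    ∃ D ≥ 0, ∀ x u, -(D * |u| ^ p) ≤ Fprim f x u := by
  obtain ⟨R, hR, hFR⟩ := hA5 0
  refine ⟨A + C * R ^ (q - p), by positivity, fun x u => ?_⟩
  rcases le_or_gt R |u| with hu | hu
  · have hpos : 0 < |u| ^ p := Real.rpow_pos_of_pos (hR.trans_le hu) p
    have hF0 : 0 * |u| ^ p ≤ Fprim f x u := (le_div_iff₀ hpos).1 (hFR x u hu)
    linarith [show 0 ≤ (A + C * R ^ (q - p)) * |u| ^ p by positivity]
  · have hq : |u| ^ q ≤ R ^ (q - p) * |u| ^ p := by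
      rw [show q = q - p + p by ring, Real.rpow_add' (abs_nonneg u) (by linarith), sub_add_cancel]
      gcongr
    linarith [neg_abs_le (Fprim f x u), hF x u, mul_le_mul_of_nonneg_left hq hC]

end Primitive

section SequenceSpace

variable {N : ℕ} {p q : ℝ}

theorem memE_smul {w : Vtx N → ℝ} (hw : memE N p w) (s : ℝ) : memE N p (s • w) :=
  (hw.mul_left (|s| ^ p)).congr fun x => by
    simp only [Pi.smul_apply, smul_eq_mul, abs_mul, Real.mul_rpow (abs_nonneg s) (abs_nonneg _)]

theorem memE_of_exponent_ge (hp : 0 < p) (hpq : p ≤ q) {w : Vtx N → ℝ} (hw : memE N p w) :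
    memE N q w := by
  refine Summable.of_norm_bounded_eventually hw ?_
  filter_upwards [hw.tendsto_cofinite_zero.eventually (eventually_le_nhds one_pos)] with x hx
  have hx1 : |w x| ≤ 1 := by
    rwa [← Real.one_rpow p, Real.rpow_le_rpow_iff (abs_nonneg _) zero_le_one hp] at hx
  rw [Real.norm_eq_abs, abs_of_nonneg (by positivity)]
  exact Real.rpow_le_rpow_of_exponent_ge' (abs_nonneg _) hx1 hp.le hpq

theorem memE_coe_lp [Fact (1 ≤ ENNReal.ofReal p)] (hp : 0 < p) (w : Elp N p) : memE N p w := by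
  have h := (memℓp_gen_iff (by rwa [ENNReal.toReal_ofReal hp.le])).1 (lp.memℓp w)
  simpa [memE, ENNReal.toReal_ofReal hp.le] using h

theorem lpSum_nonneg (w : Vtx N → ℝ) : 0 ≤ lpSum N p w :=
  tsum_nonneg fun _ => by positivity

theorem lpSum_smul (w : Vtx N → ℝ) {s : ℝ} (hs : 0 ≤ s) :
    lpSum N p (s • w) = s ^ p * lpSum N p w := by
  simp only [lpSum, Pi.smul_apply, smul_eq_mul, abs_mul, abs_of_nonneg hs,
    Real.mul_rpow hs (abs_nonneg _), tsum_mul_left]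

theorem abs_le_lpSum_rpow_inv (hp : 0 < p) {w : Vtx N → ℝ} (hw : memE N p w) (x : Vtx N) :
    |w x| ≤ lpSum N p w ^ p⁻¹ := by
  rw [Real.le_rpow_inv_iff_of_pos (abs_nonneg _) (lpSum_nonneg w) hp]
  exact hw.le_tsum x fun _ _ => by positivity

variable {f : Vtx N → ℝ → ℝ}

theorem summable_Fprim (hp : 0 < p) (hpq : p ≤ q) {A C : ℝ}
    (hF : ∀ x t, |Fprim f x t| ≤ A * |t| ^ p + C * |t| ^ q) {u : Vtx N → ℝ} (hu : memE N p u) :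
    Summable fun x => Fprim f x (u x) :=
  Summable.of_norm_bounded ((hu.mul_left A).add ((memE_of_exponent_ge hp hpq hu).mul_left C))
    fun x => hF x (u x)

theorem tsum_Fprim_ge {D : ℝ} (hlow : ∀ x t, -(D * |t| ^ p) ≤ Fprim f x t) {u : Vtx N → ℝ}
    (hsum : Summable fun x => Fprim f x (u x)) (hu : memE N p u) (x₀ : Vtx N) :
    Fprim f x₀ (u x₀) + D * |u x₀| ^ p - D * lpSum N p u ≤ ∑' x, Fprim f x (u x) := by
  have hG : Summable fun x => Fprim f x (u x) + D * |u x| ^ p := hsum.add (hu.mul_left D)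
  have h := hG.le_tsum x₀ fun x _ => by linarith [hlow x (u x)]
  rw [hsum.tsum_add (hu.mul_left D), tsum_mul_left] at h
  rw [lpSum]
  linarith

end SequenceSpace

section Energy

variable {N : ℕ} {p : ℝ} {V : Vtx N → ℝ}

theorem pEnergy_nonneg (u : Vtx N → ℝ) : 0 ≤ pEnergy N p u :=
  mul_nonneg (by norm_num) (tsum_nonneg fun _ => by split_ifs <;> positivity)

theorem eNormP_smul (w : Vtx N → ℝ) {s : ℝ} (hs : 0 ≤ s) :
    eNormP N p V (s • w) = s ^ p * eNormP N p V w := by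
  have habs : ∀ a b : ℝ, |s * a - s * b| ^ p = s ^ p * |a - b| ^ p := fun a b => by
    rw [← mul_sub, abs_mul, abs_of_nonneg hs, Real.mul_rpow hs (abs_nonneg _)]
  simp only [eNormP, pEnergy, Pi.smul_apply, smul_eq_mul, habs, abs_mul, abs_of_nonneg hs,
    Real.mul_rpow hs (abs_nonneg _), ← mul_ite_zero, mul_left_comm _ (s ^ p), tsum_mul_left]
  ring

theorem lpSum_le_eNormP {V₁ V₂ : ℝ} (hV₁ : 0 ≤ V₁) (hV₁V : ∀ x, V₁ ≤ V x)
    (hVV₂ : ∀ x, V x ≤ V₂) {w : Vtx N → ℝ} (hw : memE N p w) :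
    V₁ * lpSum N p w ≤ eNormP N p V w := by
  have hV : ∀ x, 0 ≤ V x := fun x => hV₁.trans (hV₁V x)
  have hVw : Summable fun x => V x * |w x| ^ p :=
    (hw.mul_left V₂).of_norm_bounded fun x => by
      rw [Real.norm_eq_abs, abs_of_nonneg (mul_nonneg (hV x) (by positivity))]
      exact mul_le_mul_of_nonneg_right (hVV₂ x) (by positivity)
  calc V₁ * lpSum N p w = ∑' x, V₁ * |w x| ^ p := tsum_mul_left.symm
    _ ≤ ∑' x, V x * |w x| ^ p :=
      (hw.mul_left V₁).tsum_le_tsum (fun x => mul_le_mul_of_nonneg_right (hV₁V x) (by positivity))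
        hVw
    _ ≤ eNormP N p V w := le_add_of_nonneg_left (pEnergy_nonneg w)

theorem eNormP_eq_one_of_eNorm_eq_one (hp : p ≠ 0) (hV : ∀ x, 0 ≤ V x) {w : Vtx N → ℝ}
    (h : eNorm N p V w = 1) : eNormP N p V w = 1 := by
  have h0 : 0 ≤ eNormP N p V w :=
    add_nonneg (pEnergy_nonneg w) (tsum_nonneg fun x => mul_nonneg (hV x) (by positivity))
  rw [eNorm, one_div] at h
  rw [← Real.rpow_inv_rpow h0 hp, h, Real.one_rpow]

theorem eNorm_zero (hp : p ≠ 0) : eNorm N p V 0 = 0 := by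
  simp [eNorm, eNormP, pEnergy, Real.zero_rpow hp, Real.zero_rpow (inv_ne_zero hp)]

end Energy

section Functional

variable {N : ℕ} {p q : ℝ} {V : Vtx N → ℝ} {f : Vtx N → ℝ → ℝ}

theorem exists_le_PhiFun_smul (hp : 1 < p)
    (hA3 : ∀ ε > (0:ℝ), ∃ δ > (0:ℝ), ∀ x u, |u| < δ → |f x u| ≤ ε * |u| ^ (p - 1))
    {B : ℝ} (hB : 0 < B) :
    ∃ t₀ > (0:ℝ), ∃ c₀ > (0:ℝ), ∀ w, memE N p w → eNormP N p V w = 1 → lpSum N p w ≤ B →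
      c₀ ≤ PhiFun N p V f (t₀ • w) := by
  have hp0 : 0 < p := by linarith
  -- with this `ε` the nonlinear part of `Φ(t₀w)` is at most half of `t₀ᵖ/p`
  obtain ⟨δ, hδ, hfδ⟩ := hA3 (1 / (2 * p * B)) (by positivity)
  set t₀ := δ / (B ^ p⁻¹ + 1)
  have ht₀ : 0 < t₀ := by positivity
  refine ⟨t₀, ht₀, t₀ ^ p / (2 * p), by positivity, fun w hw hnorm hwB => ?_⟩
  have hsmall : ∀ x, |(t₀ • w) x| < δ := fun x => calc
    |(t₀ • w) x| = t₀ * |w x| := by rw [Pi.smul_apply, smul_eq_mul, abs_mul, abs_of_pos ht₀]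
    _ ≤ t₀ * B ^ p⁻¹ := by
      gcongr
      exact (abs_le_lpSum_rpow_inv hp0 hw x).trans
        (Real.rpow_le_rpow (lpSum_nonneg w) hwB (by positivity))
    _ < δ := by
      rw [div_mul_eq_mul_div, div_lt_iff₀ (by positivity)]
      nlinarith [Real.rpow_nonneg hB.le p⁻¹]
  have hF : ∑' x, Fprim f x ((t₀ • w) x) ≤ 1 / (2 * p * B) * (t₀ ^ p * lpSum N p w) := by
    rw [← lpSum_smul w ht₀.le, lpSum]
    exact (le_abs_self _).trans <| tsum_of_norm_bounded (f := fun x => Fprim f x ((t₀ • w) x))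
      ((memE_smul hw t₀).hasSum.mul_left _)
      fun x => abs_Fprim_le_of_abs_lt hp.le (by positivity) (hfδ x) (hsmall x)
  have hFB : 1 / (2 * p * B) * (t₀ ^ p * lpSum N p w) ≤ t₀ ^ p / (2 * p) :=
    calc _ ≤ 1 / (2 * p * B) * (t₀ ^ p * B) := by gcongr
      _ = t₀ ^ p / (2 * p) := by field_simp
  have hhalf : 1 / p * (t₀ ^ p * 1) = t₀ ^ p / (2 * p) + t₀ ^ p / (2 * p) := by
    field_simp
    ring
  rw [PhiFun, eNormP_smul w ht₀.le, hnorm]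
  linarith

theorem PhiFun_smul_le (hp : 0 < p) (hpq : p ≤ q) {A C D : ℝ}
    (hF : ∀ x t, |Fprim f x t| ≤ A * |t| ^ p + C * |t| ^ q)
    (hlow : ∀ x t, -(D * |t| ^ p) ≤ Fprim f x t) {w : Vtx N → ℝ} (hw : memE N p w)
    {s : ℝ} (hs : 0 ≤ s) (x₀ : Vtx N) :
    PhiFun N p V f (s • w) ≤ s ^ p * (eNormP N p V w / p + D * lpSum N p w)
      - (Fprim f x₀ (s * w x₀) + D * |s * w x₀| ^ p) := by
  have h := tsum_Fprim_ge hlow (summable_Fprim hp hpq hF (memE_smul hw s)) (memE_smul hw s) x₀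
  rw [lpSum_smul w hs] at h
  rw [PhiFun, eNormP_smul w hs]
  linear_combination h

theorem exists_pos_le_of_le_PhiFun_smul (hp : 0 < p) (hpq : p ≤ q) {A C D B c₀ : ℝ}
    (hF : ∀ x t, |Fprim f x t| ≤ A * |t| ^ p + C * |t| ^ q)
    (hlow : ∀ x t, -(D * |t| ^ p) ≤ Fprim f x t) (hD : 0 ≤ D) (hB : 0 ≤ B) (hc₀ : 0 < c₀) :
    ∃ δ > (0:ℝ), ∀ w, memE N p w → eNormP N p V w = 1 → lpSum N p w ≤ B →
      ∀ s, 0 < s → c₀ ≤ PhiFun N p V f (s • w) → δ ≤ s := by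
  refine ⟨(c₀ / (1 / p + D * B)) ^ p⁻¹, by positivity, fun w hw hnorm hwB s hs hc => ?_⟩
  rw [Real.rpow_inv_le_iff_of_pos (by positivity) hs.le hp, div_le_iff₀ (by positivity)]
  have h := PhiFun_smul_le (V := V) hp hpq hF hlow hw hs.le 0
  have hDB : s ^ p * (D * lpSum N p w) ≤ s ^ p * (D * B) := by gcongr
  rw [hnorm] at h
  linear_combination hc + h + hDB + hlow 0 (s * w 0)

theorem exists_PhiFun_smul_neg (hp : 0 < p) (hpq : p ≤ q) {A C D B c : ℝ}
    (hF : ∀ x t, |Fprim f x t| ≤ A * |t| ^ p + C * |t| ^ q)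
    (hlow : ∀ x t, -(D * |t| ^ p) ≤ Fprim f x t) (hD : 0 ≤ D) (hB : 0 ≤ B) (hc : 0 < c)
    (hA5 : ∀ M : ℝ, ∃ R > (0:ℝ), ∀ x u, R ≤ |u| → M ≤ Fprim f x u / |u| ^ p) :
    ∃ R > (0:ℝ), ∀ w, memE N p w → eNormP N p V w = 1 → lpSum N p w ≤ B →
      ∀ x₀, c ≤ |w x₀| → ∀ s, R < s → PhiFun N p V f (s • w) < 0 := by
  -- chosen so that the term at `x₀` exceeds the bound `sᵖ (1/p + D B)` on the rest by `sᵖ`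
  obtain ⟨R, hR, hFR⟩ := hA5 ((1 / p + D * B + 1) / c ^ p)
  refine ⟨R / c, by positivity, fun w hw hnorm hwB x₀ hx₀ s hs => ?_⟩
  have hs0 : 0 < s := (by positivity : (0:ℝ) < R / c).trans hs
  have hRs : R ≤ |s * w x₀| := by
    rw [div_lt_iff₀ hc] at hs
    rw [abs_mul, abs_of_pos hs0]
    nlinarith
  have hcs : s ^ p * c ^ p ≤ |s * w x₀| ^ p := by
    rw [abs_mul, abs_of_pos hs0, Real.mul_rpow hs0.le (abs_nonneg _)]
    gcongr
  have hbig : (1 / p + D * B + 1) * s ^ p ≤ Fprim f x₀ (s * w x₀) := by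
    calc (1 / p + D * B + 1) * s ^ p = (1 / p + D * B + 1) / c ^ p * (s ^ p * c ^ p) := by
          field_simp
      _ ≤ (1 / p + D * B + 1) / c ^ p * |s * w x₀| ^ p :=
        mul_le_mul_of_nonneg_left hcs (by positivity)
      _ ≤ Fprim f x₀ (s * w x₀) :=
        (le_div_iff₀ (Real.rpow_pos_of_pos (hR.trans_le hRs) p)).1 (hFR x₀ _ hRs)
  have h := PhiFun_smul_le (V := V) hp hpq hF hlow hw hs0.le x₀
  have hDB : s ^ p * (D * lpSum N p w) ≤ s ^ p * (D * B) := by gcongr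
  rw [hnorm] at h
  nlinarith [Real.rpow_pos_of_pos hs0 p, show 0 ≤ D * |s * w x₀| ^ p by positivity]

end Functional

theorem stmt_11_general (N : ℕ) (p q : ℝ) (hp : 1 < p) (hq : p < q)
    (V : Vtx N → ℝ) (f : Vtx N → ℝ → ℝ) (T : ℕ) (hT : 0 < T)
    (hA1 : ∃ a : ℝ, 0 < a ∧ ∀ x u, |f x u| ≤ a * (1 + |u| ^ (q - 1)))
    (hA2V : ∀ x (i : Fin N), V (x + (T : ℤ) • Pi.single i 1) = V x)
    (hVpos : ∀ x, 0 < V x)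
    (hA3 : ∀ ε > (0:ℝ), ∃ δ > (0:ℝ), ∀ x u, |u| < δ → |f x u| ≤ ε * |u| ^ (p - 1))
    (hA5 : ∀ M : ℝ, ∃ R > (0:ℝ), ∀ x u, R ≤ |u| → M ≤ Fprim f x u / |u| ^ p)
    [Fact (1 ≤ ENNReal.ofReal p)] :
    (∃ δ > (0:ℝ), ∀ w : Vtx N → ℝ, memE N p w → eNorm N p V w = 1 →
      ∀ s : ℝ, 0 < s →
        (∀ t : ℝ, 0 < t → PhiFun N p V f (t • w) ≤ PhiFun N p V f (s • w)) →
        δ ≤ s) ∧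
    (∀ K : Set (Elp N p), IsCompact K → (∀ w ∈ K, eNorm N p V ⇑w = 1) →
      ∃ C > (0:ℝ), ∀ w ∈ K, ∀ s : ℝ, 0 < s →
        (∀ t : ℝ, 0 < t → PhiFun N p V f (t • ⇑w) ≤ PhiFun N p V f (s • ⇑w)) →
        s ≤ C) := by
  have hp0 : 0 < p := by linarith
  obtain ⟨a, b, hV⟩ := exists_min_max_of_periodic_single hT hA2V
  have hunit : ∀ w, memE N p w → eNorm N p V w = 1 →
      eNormP N p V w = 1 ∧ lpSum N p w ≤ 1 / V a := fun w hw h => by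
    have hn := eNormP_eq_one_of_eNorm_eq_one hp0.ne' (fun x => (hVpos x).le) h
    refine ⟨hn, (le_div_iff₀' (hVpos a)).2 ?_⟩
    simpa [hn] using lpSum_le_eNormP (hVpos a).le (fun x => (hV x).1) (fun x => (hV x).2) hw
  obtain ⟨t₀, ht₀, c₀, hc₀, hmp⟩ := exists_le_PhiFun_smul (V := V) hp hA3 (one_div_pos.2 (hVpos a))
  obtain ⟨C, hC, hF⟩ := exists_abs_Fprim_le hp.le (by linarith) hA1 hA3 one_pos
  obtain ⟨D, hD, hlow⟩ := exists_neg_le_Fprim hp0 hq.le zero_le_one hC hF hA5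
  have hB : 0 ≤ 1 / V a := (one_div_pos.2 (hVpos a)).le
  refine ⟨?_, fun K hK hK1 => ?_⟩
  · obtain ⟨δ, hδ, hlb⟩ := exists_pos_le_of_le_PhiFun_smul (V := V) hp0 hq.le hF hlow hD hB hc₀
    refine ⟨δ, hδ, fun w hw h s hs hmax => ?_⟩
    obtain ⟨hn, hS⟩ := hunit w hw h
    exact hlb w hw hn hS s hs ((hmp w hw hn hS).trans (hmax t₀ ht₀))
  · obtain ⟨c, hc, hcK⟩ := exists_pos_le_norm_apply_of_isCompact hK fun h0 => by
      have h := hK1 0 h0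
      rw [lp.coeFn_zero, eNorm_zero hp0.ne'] at h
      exact zero_ne_one h
    obtain ⟨R, hR, hneg⟩ := exists_PhiFun_smul_neg (V := V) hp0 hq.le hF hlow hD hB hc hA5
    refine ⟨R, hR, fun w hw s hs hmax => le_of_not_gt fun hRs => ?_⟩
    obtain ⟨x₀, hx₀⟩ := hcK w hw
    have hwE := memE_coe_lp hp0 w
    obtain ⟨hn, hS⟩ := hunit w hwE (hK1 w hw)
    linarith [hmp w hwE hn hS, hmax t₀ ht₀, hneg w hwE hn hS x₀ hx₀ s hRs]

/-- uniform lower bound for the maximum point s_w over the unit sphere,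
and an upper bound on compact subsets of the unit sphere. -/
theorem stmt_11 (N : ℕ) (p q : ℝ) (hp : 1 < p) (hq : p < q)
    (V : Vtx N → ℝ) (f : Vtx N → ℝ → ℝ) (T : ℕ) (hT : 0 < T)
    (hA1 : ∃ a : ℝ, 0 < a ∧ ∀ x u, |f x u| ≤ a * (1 + |u| ^ (q - 1)))
    (hfc : ∀ x, Continuous (f x))
    (hA2V : ∀ x (i : Fin N), V (x + (T : ℤ) • Pi.single i 1) = V x)
    (hA2f : ∀ x (i : Fin N) (u : ℝ), f (x + (T : ℤ) • Pi.single i 1) u = f x u)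
    (hVpos : ∀ x, 0 < V x)
    (hA3 : ∀ ε > (0:ℝ), ∃ δ > (0:ℝ), ∀ x u, |u| < δ → |f x u| ≤ ε * |u| ^ (p - 1))
    (hA4 : ∀ x, StrictMonoOn (fun u => f x u / |u| ^ (p - 1)) (Set.Iio 0) ∧
               StrictMonoOn (fun u => f x u / |u| ^ (p - 1)) (Set.Ioi 0))
    (hA5 : ∀ M : ℝ, ∃ R > (0:ℝ), ∀ x u, R ≤ |u| → M ≤ Fprim f x u / |u| ^ p)
    [Fact (1 ≤ ENNReal.ofReal p)] :
    (∃ δ > (0:ℝ), ∀ w : Vtx N → ℝ, memE N p w → eNorm N p V w = 1 →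
      ∀ s : ℝ, 0 < s →
        (∀ t : ℝ, 0 < t → PhiFun N p V f (t • w) ≤ PhiFun N p V f (s • w)) →
        δ ≤ s) ∧
    (∀ K : Set (Elp N p), IsCompact K → (∀ w ∈ K, eNorm N p V ⇑w = 1) →
      ∃ C > (0:ℝ), ∀ w ∈ K, ∀ s : ℝ, 0 < s →
        (∀ t : ℝ, 0 < t → PhiFun N p V f (t • ⇑w) ≤ PhiFun N p V f (s • ⇑w)) →
        s ≤ C) :=
  stmt_11_general N p q hp hq V f T hT hA1 hA2V hVpos hA3 hA5
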